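/- Let [(A,α),(B,β),(C,γ)] be a Hom-Doi-Koppinen datum: (B,β) a monoidal Hom-bialgebra, (A,α) a right (B,β)-Hom-comodule algebra with coaction a↦a_(0)⊗a_(1), and (C,γ) a right (B,β)-Hom-module coalgebra with action c⊗b↦cb. Then ψ:C⊗A→A⊗C, c⊗a↦α(a_(0))⊗γ^{-1}(c)a_(1), defines a Hom-entwining structure [(A,α),(C,γ)]_ψ. -/
import Mathlib


open TensorProduct

namespace HomPaper

variable {k : Type*} [CommRing k]
variable {A C V : Type*}
variable [AddCommGroup A] [Module k A] [AddCommGroup C] [Module k C]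
variable [AddCommGroup V] [Module k V]

/-- Monoidal Hom-algebra axioms. -/
def IsHomAlgebra (α : A ≃ₗ[k] A) (mul : A →ₗ[k] A →ₗ[k] A) (one : A) : Prop :=
  (∀ a b c, mul (α a) (mul b c) = mul (mul a b) (α c)) ∧
  (∀ a, mul a one = α a) ∧ (∀ a, mul one a = α a) ∧
  (∀ a b, α (mul a b) = mul (α a) (α b)) ∧ α one = one

/-- Monoidal Hom-coalgebra axioms. -/
def IsHomCoalgebra (γ : C ≃ₗ[k] C) (Δ : C →ₗ[k] C ⊗[k] C) (ε : C →ₗ[k] k) : Prop :=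
  (∀ c, TensorProduct.map γ.symm.toLinearMap Δ (Δ c)
      = TensorProduct.assoc k C C C (TensorProduct.map Δ γ.symm.toLinearMap (Δ c))) ∧
  (∀ c, TensorProduct.lid k C (TensorProduct.map ε LinearMap.id (Δ c)) = γ.symm c) ∧
  (∀ c, TensorProduct.rid k C (TensorProduct.map LinearMap.id ε (Δ c)) = γ.symm c) ∧
  (∀ c, Δ (γ c) = TensorProduct.map γ.toLinearMap γ.toLinearMap (Δ c)) ∧
  (∀ c, ε (γ c) = ε c)

/-- Hom-entwining structure axioms for ψ : C ⊗ A → A ⊗ C, ψ(c⊗a) = a_κ ⊗ c^κ. -/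
def IsHomEntwining (α : A ≃ₗ[k] A) (γ : C ≃ₗ[k] C) (mul : A →ₗ[k] A →ₗ[k] A) (one : A)
    (Δ : C →ₗ[k] C ⊗[k] C) (ε : C →ₗ[k] k) (ψ : C ⊗[k] A →ₗ[k] A ⊗[k] C) : Prop :=
  -- (aa')_κ ⊗ γ(c)^κ = a_κ a'_λ ⊗ γ(c^{κλ})
  (∀ c a a', ψ (γ c ⊗ₜ mul a a')
      = TensorProduct.map (TensorProduct.lift mul) γ.toLinearMap
          ((TensorProduct.assoc k A A C).symm
            (TensorProduct.map LinearMap.id ψ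
              (TensorProduct.assoc k A C A (ψ (c ⊗ₜ a) ⊗ₜ a'))))) ∧
  -- α⁻¹(a_κ) ⊗ c^κ₁ ⊗ c^κ₂ = α⁻¹(a)_{κλ} ⊗ c₁^λ ⊗ c₂^κ
  (∀ c a, TensorProduct.map α.symm.toLinearMap Δ (ψ (c ⊗ₜ a))
      = TensorProduct.assoc k A C C
          (TensorProduct.map ψ LinearMap.id
            ((TensorProduct.assoc k C A C).symm
              (TensorProduct.map LinearMap.id ψ
                (TensorProduct.assoc k C C A (Δ c ⊗ₜ α.symm a)))))) ∧
  -- 1_κ ⊗ c^κ = 1 ⊗ c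
  (∀ c, ψ (c ⊗ₜ one) = one ⊗ₜ c) ∧
  -- a_κ ε(c^κ) = a ε(c)
  (∀ c a, TensorProduct.rid k A (TensorProduct.map LinearMap.id ε (ψ (c ⊗ₜ a))) = ε c • a) ∧
  -- ψ is a morphism in the Hom-category
  (∀ c a, ψ (γ c ⊗ₜ α a) = TensorProduct.map α.toLinearMap γ.toLinearMap (ψ (c ⊗ₜ a)))

/-- The relations defining `V ⊗_A V` (on top of base relations `R₀` defining the coring
module as a quotient of `V`). -/
def corRel (R₀ : Submodule k V) (χ : V ≃ₗ[k] V)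
    (lact : A →ₗ[k] V →ₗ[k] V) (ract : V →ₗ[k] A →ₗ[k] V) : Submodule k (V ⊗[k] V) :=
  Submodule.span k
    ({x | ∃ v a w, x = ract v a ⊗ₜ w - χ v ⊗ₜ lact a (χ.symm w)} ∪
     {x | ∃ r w, r ∈ R₀ ∧ (x = r ⊗ₜ w ∨ x = w ⊗ₜ r)})

/-- Induced left A-action on `V ⊗_A V` (on representatives). -/
noncomputable def lact2 (α : A ≃ₗ[k] A) (χ : V ≃ₗ[k] V) (lact : A →ₗ[k] V →ₗ[k] V) (a : A) :
    V ⊗[k] V →ₗ[k] V ⊗[k] V :=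
  TensorProduct.map (lact (α.symm a)) χ.toLinearMap

/-- Induced right A-action on `V ⊗_A V` (on representatives). -/
noncomputable def ract2 (α : A ≃ₗ[k] A) (χ : V ≃ₗ[k] V) (ract : V →ₗ[k] A →ₗ[k] V) (a : A) :
    V ⊗[k] V →ₗ[k] V ⊗[k] V :=
  TensorProduct.map χ.toLinearMap (ract.flip (α.symm a))

/-- The relations defining `V ⊗_A (V ⊗_A V)`. -/
def corRel3 (R₀ : Submodule k V) (α : A ≃ₗ[k] A) (χ : V ≃ₗ[k] V)
    (lact : A →ₗ[k] V →ₗ[k] V) (ract : V →ₗ[k] A →ₗ[k] V) :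
    Submodule k (V ⊗[k] (V ⊗[k] V)) :=
  Submodule.span k
    ({x | ∃ v a w, x = ract v a ⊗ₜ w - χ v ⊗ₜ lact2 α χ lact a w} ∪
     {x | ∃ v w, w ∈ corRel R₀ χ lact ract ∧ x = v ⊗ₜ w} ∪
     {x | ∃ r w, r ∈ R₀ ∧ x = r ⊗ₜ w})

/-- `(V,χ)` (modulo the relations `R₀`) together with the A-bimodule structure
`lact`, `ract`, comultiplication representative `Δ` and counit `ε` is an
`(A,α)`-Hom-coring: all axioms are stated on representatives, under the quotient
projections by `R₀` resp. the tensor-relation submodules. -/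
def IsHomCoring (α : A ≃ₗ[k] A) (mul : A →ₗ[k] A →ₗ[k] A) (one : A)
    (χ : V ≃ₗ[k] V) (lact : A →ₗ[k] V →ₗ[k] V) (ract : V →ₗ[k] A →ₗ[k] V)
    (R₀ : Submodule k V) (Δ : V →ₗ[k] V ⊗[k] V) (ε : V →ₗ[k] A) : Prop :=
  -- (V,χ) is an (A,α)-Hom-bimodule
  (∀ a b v, Submodule.Quotient.mk (p := R₀) (lact (mul a b) (χ v))
      = Submodule.Quotient.mk (p := R₀) (lact (α a) (lact b v))) ∧
  (∀ v, Submodule.Quotient.mk (p := R₀) (lact one v) = Submodule.Quotient.mk (p := R₀) (χ v)) ∧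
  (∀ v a b, Submodule.Quotient.mk (p := R₀) (ract (χ v) (mul a b))
      = Submodule.Quotient.mk (p := R₀) (ract (ract v a) (α b))) ∧
  (∀ v, Submodule.Quotient.mk (p := R₀) (ract v one) = Submodule.Quotient.mk (p := R₀) (χ v)) ∧
  (∀ a v b, Submodule.Quotient.mk (p := R₀) (ract (lact a v) (α b))
      = Submodule.Quotient.mk (p := R₀) (lact (α a) (ract v b))) ∧
  (∀ a v, Submodule.Quotient.mk (p := R₀) (χ (lact a v))
      = Submodule.Quotient.mk (p := R₀) (lact (α a) (χ v))) ∧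
  (∀ v a, Submodule.Quotient.mk (p := R₀) (χ (ract v a))
      = Submodule.Quotient.mk (p := R₀) (ract (χ v) (α a))) ∧
  (∀ r ∈ R₀, χ r ∈ R₀) ∧
  -- Δ and ε are well defined on the quotient by R₀
  (∀ r ∈ R₀, Submodule.Quotient.mk (p := corRel R₀ χ lact ract) (Δ r) = 0) ∧
  (∀ r ∈ R₀, ε r = 0) ∧
  -- A-bilinearity of Δ
  (∀ a v, Submodule.Quotient.mk (p := corRel R₀ χ lact ract) (Δ (lact a v))
      = Submodule.Quotient.mk (p := corRel R₀ χ lact ract) (lact2 α χ lact a (Δ v))) ∧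
  (∀ v a, Submodule.Quotient.mk (p := corRel R₀ χ lact ract) (Δ (ract v a))
      = Submodule.Quotient.mk (p := corRel R₀ χ lact ract) (ract2 α χ ract a (Δ v))) ∧
  -- A-bilinearity of ε
  (∀ a v, ε (lact a v) = mul a (ε v)) ∧
  (∀ v a, ε (ract v a) = mul (ε v) a) ∧
  -- Hom-coassociativity: χ⁻¹(c₁) ⊗ Δ(c₂) = c₁₁ ⊗ (c₁₂ ⊗ χ⁻¹(c₂))
  (∀ v, Submodule.Quotient.mk (p := corRel3 R₀ α χ lact ract)
        (TensorProduct.map χ.symm.toLinearMap Δ (Δ v))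
      = Submodule.Quotient.mk (p := corRel3 R₀ α χ lact ract)
        (TensorProduct.assoc k V V V (TensorProduct.map Δ χ.symm.toLinearMap (Δ v)))) ∧
  -- counity: ε(c₁)c₂ = c = c₁ε(c₂)
  (∀ v, Submodule.Quotient.mk (p := R₀) (TensorProduct.lift (lact ∘ₗ ε) (Δ v))
      = Submodule.Quotient.mk (p := R₀) v) ∧
  (∀ v, Submodule.Quotient.mk (p := R₀) (TensorProduct.lift (ract.compl₂ ε) (Δ v))
      = Submodule.Quotient.mk (p := R₀) v) ∧
  -- compatibility with the twisting maps
  (∀ v, Submodule.Quotient.mk (p := corRel R₀ χ lact ract) (Δ (χ v))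
      = Submodule.Quotient.mk (p := corRel R₀ χ lact ract)
        (TensorProduct.map χ.toLinearMap χ.toLinearMap (Δ v))) ∧
  (∀ v, ε (χ v) = α (ε v))

end HomPaper

namespace HomPaper

variable {k A B C M : Type*} [CommRing k]
variable [AddCommGroup A] [Module k A] [AddCommGroup B] [Module k B]
variable [AddCommGroup C] [Module k C] [AddCommGroup M] [Module k M]

/-- Monoidal Hom-bialgebra axioms. -/
def IsHomBialgebra (β : B ≃ₗ[k] B) (mul : B →ₗ[k] B →ₗ[k] B) (one : B)
    (Δ : B →ₗ[k] B ⊗[k] B) (ε : B →ₗ[k] k) : Prop :=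
  IsHomAlgebra β mul one ∧ IsHomCoalgebra β Δ ε ∧
  (∀ b b', Δ (mul b b')
      = (TensorProduct.map (TensorProduct.lift mul) (TensorProduct.lift mul))
          (TensorProduct.tensorTensorTensorComm k B B B B (Δ b ⊗ₜ Δ b'))) ∧
  Δ one = one ⊗ₜ one ∧
  (∀ b b', ε (mul b b') = ε b * ε b') ∧ ε one = 1

/-- `(A,α)` is a right `(B,β)`-Hom-comodule algebra with coaction `ρ`. -/
def IsHomComoduleAlgebra (β : B ≃ₗ[k] B) (mulB : B →ₗ[k] B →ₗ[k] B)
    (ΔB : B →ₗ[k] B ⊗[k] B) (εB : B →ₗ[k] k)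
    (α : A ≃ₗ[k] A) (mulA : A →ₗ[k] A →ₗ[k] A) (oneA : A) (oneB : B)
    (ρ : A →ₗ[k] A ⊗[k] B) : Prop :=
  -- Hom-comodule axioms
  (∀ a, TensorProduct.map α.symm.toLinearMap ΔB (ρ a)
      = TensorProduct.assoc k A B B (TensorProduct.map ρ β.symm.toLinearMap (ρ a))) ∧
  (∀ a, TensorProduct.rid k A (TensorProduct.map LinearMap.id εB (ρ a)) = α.symm a) ∧
  (∀ a, ρ (α a) = TensorProduct.map α.toLinearMap β.toLinearMap (ρ a)) ∧
  -- ρ is a morphism of Hom-algebras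
  (∀ a a', ρ (mulA a a')
      = (TensorProduct.map (TensorProduct.lift mulA) (TensorProduct.lift mulB))
          (TensorProduct.tensorTensorTensorComm k A B A B (ρ a ⊗ₜ ρ a'))) ∧
  ρ oneA = oneA ⊗ₜ oneB

/-- `(C,γ)` is a right `(B,β)`-Hom-module coalgebra with action `act`. -/
def IsHomModuleCoalgebra (β : B ≃ₗ[k] B) (mulB : B →ₗ[k] B →ₗ[k] B) (oneB : B)
    (ΔB : B →ₗ[k] B ⊗[k] B) (εB : B →ₗ[k] k)
    (γ : C ≃ₗ[k] C) (ΔC : C →ₗ[k] C ⊗[k] C) (εC : C →ₗ[k] k)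
    (act : C →ₗ[k] B →ₗ[k] C) : Prop :=
  -- Hom-module axioms
  (∀ c b b', act (γ c) (mulB b b') = act (act c b) (β b')) ∧
  (∀ c, act c oneB = γ c) ∧
  (∀ c b, γ (act c b) = act (γ c) (β b)) ∧
  -- the action is a morphism of Hom-coalgebras
  (∀ c b, ΔC (act c b)
      = (TensorProduct.map (TensorProduct.lift act) (TensorProduct.lift act))
          (TensorProduct.tensorTensorTensorComm k C C B B (ΔC c ⊗ₜ ΔB b))) ∧
  (∀ c b, εC (act c b) = εC c * εB b)

/-- The entwining map of a Hom-Doi-Koppinen datum: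
`ψ(c⊗a) = α(a₍₀₎) ⊗ γ⁻¹(c)·a₍₁₎`. -/
noncomputable def dkEntwining (α : A ≃ₗ[k] A) (γ : C ≃ₗ[k] C)
    (ρA : A →ₗ[k] A ⊗[k] B) (actC : C →ₗ[k] B →ₗ[k] C) :
    C ⊗[k] A →ₗ[k] A ⊗[k] C :=
  (TensorProduct.map α.toLinearMap
      ((TensorProduct.lift actC) ∘ₗ (TensorProduct.map γ.symm.toLinearMap LinearMap.id))) ∘ₗ
    (TensorProduct.leftComm k C A B).toLinearMap ∘ₗ
      (TensorProduct.map LinearMap.id ρA)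

set_option maxHeartbeats 1000000 in
/-- Let `[(A,α),(B,β),(C,γ)]` be a Hom-Doi-Koppinen datum: `(B,β)` a
monoidal Hom-bialgebra, `(A,α)` a right `(B,β)`-Hom-comodule algebra, `(C,γ)` a right
`(B,β)`-Hom-module coalgebra. Then `ψ : C⊗A → A⊗C`, `c⊗a ↦ α(a₍₀₎) ⊗ γ⁻¹(c)a₍₁₎`,
defines a Hom-entwining structure `[(A,α),(C,γ)]_ψ`. -/
theorem doiKoppinen_entwining
    (β : B ≃ₗ[k] B) (mulB : B →ₗ[k] B →ₗ[k] B) (oneB : B)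
    (ΔB : B →ₗ[k] B ⊗[k] B) (εB : B →ₗ[k] k)
    (hB : IsHomBialgebra β mulB oneB ΔB εB)
    (α : A ≃ₗ[k] A) (mulA : A →ₗ[k] A →ₗ[k] A) (oneA : A) (ρA : A →ₗ[k] A ⊗[k] B)
    (hAalg : IsHomAlgebra α mulA oneA)
    (hA : IsHomComoduleAlgebra β mulB ΔB εB α mulA oneA oneB ρA)
    (γ : C ≃ₗ[k] C) (ΔC : C →ₗ[k] C ⊗[k] C) (εC : C →ₗ[k] k)
    (actC : C →ₗ[k] B →ₗ[k] C)
    (hCco : IsHomCoalgebra γ ΔC εC)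
    (hC : IsHomModuleCoalgebra β mulB oneB ΔB εB γ ΔC εC actC) :
    IsHomEntwining α γ mulA oneA ΔC εC (dkEntwining α γ ρA actC) := by
  obtain ⟨hBalg, hBco, hBΔmul, hBΔone, hBεmul, hBεone⟩ := hB
  obtain ⟨hAcoass, hAcounit, hAρα, hAρmul, hAρone⟩ := hA
  obtain ⟨hCmulact, hConeact, hCγact, hCΔact, hCεact⟩ := hC
  obtain ⟨hCco1, hCco2, hCco3, hCco4, hCco5⟩ := hCco
  obtain ⟨hAass, hAone_r, hAone_l, hAα, hAαone⟩ := hAalg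
  have hpsi : ∀ (c : C) (a : A), dkEntwining α γ ρA actC (c ⊗ₜ a)
      = TensorProduct.map α.toLinearMap (actC (γ.symm c)) (ρA a) := by
    intro c a
    unfold dkEntwining
    simp only [LinearMap.comp_apply, LinearEquiv.coe_coe, TensorProduct.map_tmul,
      LinearMap.id_coe, id_eq]
    generalize ρA a = t
    induction t using TensorProduct.induction_on with
    | zero => simp
    | tmul x y => simp [TensorProduct.leftComm_tmul]
    | add u v hu hv => simp only [tmul_add, map_add, hu, hv]
  have hεγinv : ∀ c : C, εC (γ.symm c) = εC c := by
    intro c; conv_rhs => rw [← γ.apply_symm_apply c, hCco5]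
  have hΔγinv : ∀ c : C, ΔC (γ.symm c)
      = TensorProduct.map γ.symm.toLinearMap γ.symm.toLinearMap (ΔC c) := by
    intro c
    conv_rhs => rw [← γ.apply_symm_apply c, hCco4]
    generalize ΔC (γ.symm c) = t
    induction t using TensorProduct.induction_on with
    | zero => simp
    | tmul x y => simp only [TensorProduct.map_tmul, LinearEquiv.coe_coe,
        LinearEquiv.symm_apply_apply]
    | add u v hu hv => rw [map_add, map_add, ← hu, ← hv]
  have hραinv : ∀ a : A, ρA (α.symm a)
      = TensorProduct.map α.symm.toLinearMap β.symm.toLinearMap (ρA a) := by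
    intro a
    conv_rhs => rw [← α.apply_symm_apply a, hAρα]
    generalize ρA (α.symm a) = t
    induction t using TensorProduct.induction_on with
    | zero => simp
    | tmul x y => simp only [TensorProduct.map_tmul, LinearEquiv.coe_coe,
        LinearEquiv.symm_apply_apply]
    | add u v hu hv => rw [map_add, map_add, ← hu, ← hv]
  refine ⟨?_, ?_, ?_, ?_, ?_⟩
  · -- axiom 1
    intro c a a'
    rw [hpsi, hpsi c a, hAρmul]
    obtain ⟨t', ht'⟩ : ∃ t', ρA a' = t' := ⟨_, rfl⟩
    rw [ht']
    generalize ρA a = t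
    induction t using TensorProduct.induction_on with
    | zero => simp
    | add u v hu hv =>
      simp only [add_tmul, tmul_add, map_add, hu, hv]
    | tmul x y =>
      simp only [TensorProduct.map_tmul, LinearEquiv.coe_coe, TensorProduct.assoc_tmul,
        LinearMap.id_coe, id_eq, LinearEquiv.symm_apply_apply]
      rw [hpsi, ht']
      clear ht'
      induction t' using TensorProduct.induction_on with
      | zero => simp
      | add u v hu hv =>
        simp only [add_tmul, tmul_add, map_add, hu, hv]
      | tmul x' y' =>
        simp only [TensorProduct.map_tmul, TensorProduct.tensorTensorTensorComm_tmul,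
          TensorProduct.assoc_tmul, TensorProduct.assoc_symm_tmul, TensorProduct.lift.tmul,
          LinearEquiv.coe_coe, LinearMap.id_coe, id_eq, LinearEquiv.symm_apply_apply]
        rw [hAα]
        congr 1
        rw [hCγact, γ.apply_symm_apply]
        conv_lhs => rw [← γ.apply_symm_apply c, hCmulact]
  · -- axiom 2
    intro c a
    set g : C ⊗[k] B →ₗ[k] C := TensorProduct.lift (actC ∘ₗ γ.symm.toLinearMap) with hg
    set F' : (C ⊗[k] C) ⊗[k] (A ⊗[k] (B ⊗[k] B)) →ₗ[k] A ⊗[k] (C ⊗[k] C) :=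
      (TensorProduct.map α.toLinearMap
        ((TensorProduct.map g g) ∘ₗ
          (TensorProduct.tensorTensorTensorComm k C C B B).toLinearMap)) ∘ₗ
        (TensorProduct.leftComm k (C ⊗[k] C) A (B ⊗[k] B)).toLinearMap with hF'
    have hF'tmul : ∀ (c₁ c₂ : C) (x : A) (y₁ y₂ : B),
        F' ((c₁ ⊗ₜ c₂) ⊗ₜ (x ⊗ₜ (y₁ ⊗ₜ y₂)))
          = α x ⊗ₜ (actC (γ.symm c₁) y₁ ⊗ₜ actC (γ.symm c₂) y₂) := by
      intro c₁ c₂ x y₁ y₂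
      rw [hF']
      simp only [LinearMap.coe_comp, Function.comp_apply, LinearEquiv.coe_coe,
        TensorProduct.leftComm_tmul, TensorProduct.map_tmul,
        TensorProduct.tensorTensorTensorComm_tmul, hg, TensorProduct.lift.tmul]
    have hL : TensorProduct.map α.symm.toLinearMap ΔC
          (TensorProduct.map α.toLinearMap (actC (γ.symm c)) (ρA a))
        = F' (ΔC c ⊗ₜ (TensorProduct.map α.symm.toLinearMap ΔB (ρA a))) := by
      generalize ρA a = t
      induction t using TensorProduct.induction_on with
      | zero => simp
      | add u v hu hv => simp only [map_add, tmul_add, hu, hv]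
      | tmul x y =>
        simp only [TensorProduct.map_tmul, LinearEquiv.coe_coe]
        rw [hCΔact, hΔγinv]
        generalize ΔC c = s
        induction s using TensorProduct.induction_on with
        | zero => simp
        | add u v hu hv => simp only [map_add, tmul_add, add_tmul, hu, hv]
        | tmul c₁ c₂ =>
          generalize ΔB y = u
          induction u using TensorProduct.induction_on with
          | zero => simp
          | add u v hu hv => simp only [map_add, tmul_add, add_tmul, hu, hv]
          | tmul y₁ y₂ =>
            rw [hF'tmul, α.apply_symm_apply]
            simp only [TensorProduct.map_tmul, TensorProduct.tensorTensorTensorComm_tmul,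
              TensorProduct.lift.tmul, LinearEquiv.coe_coe, LinearEquiv.symm_apply_apply]
    have hR : TensorProduct.assoc k A C C
          (TensorProduct.map (dkEntwining α γ ρA actC) LinearMap.id
            ((TensorProduct.assoc k C A C).symm
              (TensorProduct.map LinearMap.id (dkEntwining α γ ρA actC)
                (TensorProduct.assoc k C C A (ΔC c ⊗ₜ α.symm a)))))
        = F' (ΔC c ⊗ₜ (TensorProduct.assoc k A B B
            (TensorProduct.map ρA β.symm.toLinearMap (ρA a)))) := by
      generalize ΔC c = s
      induction s using TensorProduct.induction_on with
      | zero => simp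
      | add u v hu hv => simp only [map_add, tmul_add, add_tmul, hu, hv]
      | tmul c₁ c₂ =>
        simp only [TensorProduct.assoc_tmul, TensorProduct.map_tmul, LinearMap.id_coe, id_eq]
        rw [hpsi c₂ (α.symm a), hραinv]
        generalize ρA a = t
        induction t using TensorProduct.induction_on with
        | zero => simp
        | add u v hu hv => simp only [map_add, tmul_add, add_tmul, hu, hv]
        | tmul x y =>
          simp only [TensorProduct.map_tmul, LinearEquiv.coe_coe, α.apply_symm_apply,
            TensorProduct.assoc_symm_tmul, TensorProduct.assoc_tmul, LinearMap.id_coe, id_eq]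
          rw [hpsi c₁ x]
          generalize ρA x = u
          induction u using TensorProduct.induction_on with
          | zero => simp
          | add u v hu hv => simp only [map_add, tmul_add, add_tmul, hu, hv]
          | tmul x₀ x₁ =>
            simp only [TensorProduct.map_tmul, LinearEquiv.coe_coe,
              TensorProduct.assoc_tmul, TensorProduct.add_tmul]
            rw [hF'tmul]
    rw [hpsi c a, hL, hAcoass a, hR]
  · -- axiom 3
    intro c
    rw [hpsi, hAρone]
    simp [hConeact, hAαone]
  · -- axiom 4
    intro c a
    rw [hpsi]
    have key : ∀ t : A ⊗[k] B,
        TensorProduct.rid k A (TensorProduct.map LinearMap.id εC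
          (TensorProduct.map α.toLinearMap (actC (γ.symm c)) t))
        = εC c • α (TensorProduct.rid k A (TensorProduct.map LinearMap.id εB t)) := by
      intro t
      induction t using TensorProduct.induction_on with
      | zero => simp
      | tmul x y =>
        simp only [TensorProduct.map_tmul, LinearMap.id_coe, id_eq, LinearEquiv.coe_coe,
          TensorProduct.rid_tmul, hCεact, hεγinv, map_smul, mul_smul]
      | add u v hu hv => simp only [map_add, hu, hv, smul_add]
    rw [key, hAcounit, α.apply_symm_apply]
  · -- axiom 5
    intro c a
    rw [hpsi, hpsi, hAρα]
    generalize ρA a = t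
    induction t using TensorProduct.induction_on with
    | zero => simp
    | tmul x y =>
      simp only [TensorProduct.map_tmul, LinearEquiv.coe_coe, γ.symm_apply_apply]
      rw [← γ.apply_symm_apply c, hCγact, γ.symm_apply_apply]
    | add u v hu hv => simp only [map_add, hu, hv]

end HomPaper
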